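/- arXiv:2203.07198 — 2 statements merged into one kernel-verified Lean document; each statement's English description precedes it below -/
import Mathlib

section
/- Let E be a Banach space, b ∈ L^∞(J, L(E)), and suppose ‖U(a,σ)‖_{L(E)} ≤ M e^{ω(a-σ)} and a continuous B satisfies ‖B(s)‖ ≤ ‖b‖_∞ M e^{(ω+‖b‖_∞ M)s}‖φ‖_{L^1}. Define (S(s)φ)(a) := U(a, a-s)φ(a-s) for 0 ≤ s < a and (S(s)φ)(a) := U(a,0)B(s-a) for s ≥ a. Then ‖S(s)φ‖_{L^1(J,E)} ≤ M e^{(ω + ‖b‖_∞ M)s} ‖φ‖_{L^1(J,E)} for all s ≥ 0. -/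
/-! Split `[0, am]` at `min s am` and put `k = ‖b‖_∞ M`. For `a ≤ s` the integrand is
`‖U a 0 (B (s - a))‖ ≤ M ‖φ‖₁ e^{ωs} · k e^{k(s-a)}`, whose integral over `[0, min s am]` is
at most `M ‖φ‖₁ e^{ωs} (e^{ks} - 1)`. For `a > s` the integrand is
`‖U a (a - s) (φ (a - s))‖ ≤ M e^{ωs} ‖φ (a - s)‖`, a translate of `‖φ‖`, contributing at most
`M e^{ωs} ‖φ‖₁`. The two add up to `M e^{(ω+k)s} ‖φ‖₁`. -/

open MeasureTheory intervalIntegral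
open Real Set

theorem integral_mul_exp_mul_sub (k s c : ℝ) :
    ∫ a in (0 : ℝ)..c, k * exp (k * (s - a)) = exp (k * s) - exp (k * (s - c)) := by
  have hderiv : ∀ a, HasDerivAt (fun x => -exp (k * (s - x))) (k * exp (k * (s - a))) a :=
    fun a => (((hasDerivAt_id a).const_sub s).const_mul k).exp.neg.congr_deriv (by rw [id]; ring)
  rw [integral_eq_sub_of_hasDerivAt (fun a _ => hderiv a)
    (Continuous.intervalIntegrable (by fun_prop) _ _)]
  simp only [sub_zero]
  ring

section EvolutionSemigroup

variable {E : Type*} [NormedAddCommGroup E] [NormedSpace ℝ E]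

/-- The paper's `(S(s)φ)(a)`. -/
noncomputable def evolutionSemigroup (U : ℝ → ℝ → E →L[ℝ] E) (B φ : ℝ → E) (s a : ℝ) : E :=
  if s < a then U a (a - s) (φ (a - s)) else U a 0 (B (s - a))

variable {U : ℝ → ℝ → E →L[ℝ] E} {B φ : ℝ → E} {M ω k I s a c am : ℝ}

theorem norm_evolutionSemigroup_le_of_lt
    (hU : ∀ σ a : ℝ, 0 ≤ σ → σ ≤ a → ‖U a σ‖ ≤ M * exp (ω * (a - σ))) (hs : 0 ≤ s)
    (hsa : s < a) :
    ‖evolutionSemigroup U B φ s a‖ ≤ M * exp (ω * s) * ‖φ (a - s)‖ := by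
  have hUa : ‖U a (a - s)‖ ≤ M * exp (ω * s) := by
    simpa using hU (a - s) a (by linarith) (by linarith)
  rw [evolutionSemigroup, if_pos hsa]
  exact (U a (a - s)).le_of_opNorm_le hUa _

theorem norm_evolutionSemigroup_le_of_le
    (hU : ∀ σ a : ℝ, 0 ≤ σ → σ ≤ a → ‖U a σ‖ ≤ M * exp (ω * (a - σ)))
    (hB : ∀ r, 0 ≤ r → ‖B r‖ ≤ k * exp ((ω + k) * r) * I) (ha : 0 ≤ a) (has : a ≤ s) :
    ‖evolutionSemigroup U B φ s a‖ ≤ M * I * exp (ω * s) * (k * exp (k * (s - a))) := by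
  have hUa : ‖U a 0‖ ≤ M * exp (ω * a) := by simpa using hU 0 a le_rfl ha
  rw [evolutionSemigroup, if_neg has.not_gt]
  calc ‖U a 0 (B (s - a))‖ ≤ M * exp (ω * a) * (k * exp ((ω + k) * (s - a)) * I) :=
        (U a 0).le_of_opNorm_le hUa _ |>.trans <|
          mul_le_mul_of_nonneg_left (hB _ (sub_nonneg.2 has)) ((norm_nonneg _).trans hUa)
    _ = _ := by
        rw [show (ω + k) * (s - a) = ω * (s - a) + k * (s - a) by ring, exp_add,
          show ω * s = ω * a + ω * (s - a) by ring, exp_add]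
        ring

theorem integral_zero_norm_evolutionSemigroup_le
    (hU : ∀ σ a : ℝ, 0 ≤ σ → σ ≤ a → ‖U a σ‖ ≤ M * exp (ω * (a - σ)))
    (hB : ∀ r, 0 ≤ r → ‖B r‖ ≤ k * exp ((ω + k) * r) * I) (hM : 0 ≤ M) (hI : 0 ≤ I)
    (hk : 0 ≤ k) (hc : 0 ≤ c) (hcs : c ≤ s)
    (hint : IntervalIntegrable (fun a => ‖evolutionSemigroup U B φ s a‖) volume 0 c) :
    ∫ a in (0 : ℝ)..c, ‖evolutionSemigroup U B φ s a‖ ≤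
      M * I * exp (ω * s) * (exp (k * s) - 1) :=
  calc ∫ a in (0 : ℝ)..c, ‖evolutionSemigroup U B φ s a‖
      ≤ ∫ a in (0 : ℝ)..c, M * I * exp (ω * s) * (k * exp (k * (s - a))) :=
        integral_mono_on hc hint (Continuous.intervalIntegrable (by fun_prop) _ _)
          fun a ha => norm_evolutionSemigroup_le_of_le hU hB ha.1 (ha.2.trans hcs)
    _ = M * I * exp (ω * s) * (exp (k * s) - exp (k * (s - c))) := by
        rw [intervalIntegral.integral_const_mul, integral_mul_exp_mul_sub]
    _ ≤ M * I * exp (ω * s) * (exp (k * s) - 1) := by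
        gcongr
        exact one_le_exp (mul_nonneg hk (sub_nonneg.2 hcs))

theorem integral_min_norm_evolutionSemigroup_le
    (hU : ∀ σ a : ℝ, 0 ≤ σ → σ ≤ a → ‖U a σ‖ ≤ M * exp (ω * (a - σ))) (hM : 0 ≤ M)
    (hs : 0 ≤ s) (ham : 0 ≤ am) (hφ : IntervalIntegrable (fun a => ‖φ a‖) volume 0 am)
    (hint : IntervalIntegrable (fun a => ‖evolutionSemigroup U B φ s a‖) volume (min s am) am) :
    ∫ a in min s am..am, ‖evolutionSemigroup U B φ s a‖ ≤
      M * exp (ω * s) * ∫ a in (0 : ℝ)..am, ‖φ a‖ := by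
  have hI : 0 ≤ ∫ a in (0 : ℝ)..am, ‖φ a‖ := integral_nonneg ham fun _ _ => norm_nonneg _
  rcases le_or_gt am s with hams | hsam
  · rw [min_eq_right hams, integral_same]
    positivity
  rw [min_eq_left hsam.le] at hint ⊢
  have hφs : IntervalIntegrable (fun a => ‖φ a‖) volume 0 (am - s) :=
    hφ.mono_set (uIcc_subset_uIcc_left (mem_uIcc_of_le (by linarith) (by linarith)))
  calc ∫ a in s..am, ‖evolutionSemigroup U B φ s a‖
      ≤ ∫ a in s..am, M * exp (ω * s) * ‖φ (a - s)‖ := by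
        refine integral_mono_on_of_le_Ioo hsam.le hint ?_
          fun a ha => norm_evolutionSemigroup_le_of_lt hU hs ha.1
        simpa using (hφs.comp_sub_right s).const_mul (M * exp (ω * s))
    _ = M * exp (ω * s) * ∫ a in (0 : ℝ)..am - s, ‖φ a‖ := by
        rw [intervalIntegral.integral_const_mul, integral_comp_sub_right (fun a => ‖φ a‖),
          sub_self]
    _ ≤ M * exp (ω * s) * ∫ a in (0 : ℝ)..am, ‖φ a‖ := by
        gcongr
        exact integral_mono_interval le_rfl (by linarith) (by linarith)
          (.of_forall fun _ => norm_nonneg _) hφ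

end EvolutionSemigroup

theorem semigroup_L1_bound_general
    {E : Type*} [NormedAddCommGroup E] [NormedSpace ℝ E]
    (am : ℝ) (ham : 0 < am)
    (Mb : ℝ) (hMb : 0 ≤ Mb)
    (U : ℝ → ℝ → E →L[ℝ] E) (M ω : ℝ) (hM : 1 ≤ M)
    (hU : ∀ σ a : ℝ, 0 ≤ σ → σ ≤ a → ‖U a σ‖ ≤ M * Real.exp (ω * (a - σ)))
    (φ : ℝ → E) (hφ : IntegrableOn φ (Set.Ioo 0 am))
    (B : ℝ → E)
    (hB : ∀ r, 0 ≤ r →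
      ‖B r‖ ≤ Mb * M * Real.exp ((ω + Mb * M) * r) * ∫ a in (0:ℝ)..am, ‖φ a‖) :
    ∀ s, 0 ≤ s →
      (∫ a in (0:ℝ)..am, ‖if s < a then U a (a - s) (φ (a - s)) else U a 0 (B (s - a))‖)
        ≤ M * Real.exp ((ω + Mb * M) * s) * ∫ a in (0:ℝ)..am, ‖φ a‖ := by
  intro s hs
  change ∫ a in (0 : ℝ)..am, ‖evolutionSemigroup U B φ s a‖ ≤ _
  have hM0 : 0 ≤ M := zero_le_one.trans hM
  have hφ' : IntervalIntegrable (fun a => ‖φ a‖) volume 0 am :=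
    ((intervalIntegrable_iff_integrableOn_Ioo_of_le ham.le).2 hφ).norm
  have hI : 0 ≤ ∫ a in (0 : ℝ)..am, ‖φ a‖ := integral_nonneg ham.le fun _ _ => norm_nonneg _
  by_cases hF : IntervalIntegrable (fun a => ‖evolutionSemigroup U B φ s a‖) volume 0 am
  swap
  · rw [integral_undef hF]
    positivity
  have hc : min s am ∈ uIcc 0 am := mem_uIcc_of_le (le_min hs ham.le) (min_le_right _ _)
  have hF₁ := hF.mono_set (uIcc_subset_uIcc_left hc)
  have hF₂ := hF.mono_set (uIcc_subset_uIcc_right hc)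
  rw [← integral_add_adjacent_intervals hF₁ hF₂]
  calc _ ≤ M * (∫ a in (0 : ℝ)..am, ‖φ a‖) * exp (ω * s) * (exp (Mb * M * s) - 1) +
        M * exp (ω * s) * ∫ a in (0 : ℝ)..am, ‖φ a‖ :=
        add_le_add
          (integral_zero_norm_evolutionSemigroup_le hU hB hM0 hI (mul_nonneg hMb hM0)
            (le_min hs ham.le) (min_le_left _ _) hF₁)
          (integral_min_norm_evolutionSemigroup_le hU hM0 hs ham.le hφ' hF₂)
    _ = M * exp ((ω + Mb * M) * s) * ∫ a in (0 : ℝ)..am, ‖φ a‖ := by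
        rw [add_mul, exp_add]
        ring

/-- With `(S(s)φ)(a) = U(a, a-s) φ(a-s)` for `s < a` and `(S(s)φ)(a) = U(a,0) B(s-a)` for
`s ≥ a`, and given the bounds `‖U(a,σ)‖ ≤ M e^{ω(a-σ)}` and
`‖B r‖ ≤ ‖b‖_∞ M e^{(ω+‖b‖_∞ M) r} ‖φ‖_{L¹}`, one has
`‖S(s)φ‖_{L¹(J,E)} ≤ M e^{(ω + ‖b‖_∞ M) s} ‖φ‖_{L¹(J,E)}`. -/
theorem semigroup_L1_bound
    {E : Type*} [NormedAddCommGroup E] [NormedSpace ℝ E] [CompleteSpace E]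
    (am : ℝ) (ham : 0 < am)
    (Mb : ℝ) (hMb : 0 ≤ Mb)
    (U : ℝ → ℝ → E →L[ℝ] E) (M ω : ℝ) (hM : 1 ≤ M)
    (hU : ∀ σ a : ℝ, 0 ≤ σ → σ ≤ a → ‖U a σ‖ ≤ M * Real.exp (ω * (a - σ)))
    (φ : ℝ → E) (hφ : IntegrableOn φ (Set.Ioo 0 am))
    (B : ℝ → E)
    (hB : ∀ r, 0 ≤ r →
      ‖B r‖ ≤ Mb * M * Real.exp ((ω + Mb * M) * r) * ∫ a in (0:ℝ)..am, ‖φ a‖) :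
    ∀ s, 0 ≤ s →
      (∫ a in (0:ℝ)..am, ‖if s < a then U a (a - s) (φ (a - s)) else U a 0 (B (s - a))‖)
        ≤ M * Real.exp ((ω + Mb * M) * s) * ∫ a in (0:ℝ)..am, ‖φ a‖ :=
  semigroup_L1_bound_general am ham Mb hMb U M ω hM hU φ hφ B hB
end

section
/- Let X, Y be Banach spaces with Y ⊆ X, and let U(t,s), V(t,s) ∈ L(X) be evolution systems with ‖U(t,s)‖_{L(X)} ≤ M₀ e^{η(t-s)} and ‖V(t,s)‖_{L(Y)} ≤ M₁ e^{η(t-s)}, V(r,s)Y ⊆ Y. Suppose for ψ ∈ Y the map r ↦ U(t,r)V(r,s)ψ is piecewise differentiable on [s,t] with derivative U(t,r)(B(r) − A(r))V(r,s)ψ, where A, B : [0,T] → L(Y, X). Then ‖U(t,s)ψ − V(t,s)ψ‖_X ≤ M₀ M₁ e^{η(t-s)} ‖ψ‖_Y ∫_s^t ‖A(r) − B(r)‖_{L(Y,X)} dr. -/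
open Real MeasureTheory intervalIntegral Set

/-- No integrability of `f'` is assumed: it agrees a.e. with the measurable `deriv f`, so the
majorant `g` makes it integrable. -/
theorem norm_sub_le_integral_of_hasDerivAt_off_countable
    {E : Type*} [NormedAddCommGroup E] [NormedSpace ℝ E] [CompleteSpace E]
    {f f' : ℝ → E} {g : ℝ → ℝ} {a b : ℝ} {s : Set ℝ} (hab : a ≤ b) (hs : s.Countable)
    (hf : ContinuousOn f (Icc a b)) (hderiv : ∀ x ∈ Ioo a b \ s, HasDerivAt f (f' x) x)
    (hg : IntervalIntegrable g volume a b) (hbound : ∀ x ∈ Ioo a b \ s, ‖f' x‖ ≤ g x) :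
    ‖f b - f a‖ ≤ ∫ x in a..b, g x := by
  have hae : ∀ᵐ x, x ∈ Ioc a b → x ∈ Ioo a b \ s := by
    filter_upwards [measure_eq_zero_iff_ae_notMem.1 ((hs.insert b).measure_zero volume)]
      with x hx hxI
    rw [mem_insert_iff, not_or] at hx
    exact ⟨⟨hxI.1, lt_of_le_of_ne hxI.2 hx.1⟩, hx.2⟩
  have hae' : ∀ᵐ x ∂volume.restrict (Ioc a b), x ∈ Ioo a b \ s :=
    (ae_restrict_iff' measurableSet_Ioc).2 hae
  have hmeas : AEStronglyMeasurable f' (volume.restrict (Ioc a b)) :=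
    (aestronglyMeasurable_deriv f _).congr (hae'.mono fun x hx => (hderiv x hx).deriv)
  have hf' : IntervalIntegrable f' volume a b := by
    rw [intervalIntegrable_iff_integrableOn_Ioc_of_le hab] at hg ⊢
    exact hg.mono' hmeas (hae'.mono fun x hx => hbound x hx)
  rw [← integral_eq_of_hasDerivAt_off_countable_of_le f f' hab hs hf hderiv hf']
  exact norm_integral_le_of_norm_le hab (hae.mono fun x hx hxI => hbound x (hx hxI)) hg

theorem norm_apply_apply_le_of_exp_bounds
    {X Y : Type*} [NormedAddCommGroup X] [NormedSpace ℝ X]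
    [NormedAddCommGroup Y] [NormedSpace ℝ Y]
    {M₀ M₁ η r s t : ℝ} (U : X →L[ℝ] X) (L : Y →L[ℝ] X) {v ψ : Y}
    (hU : ‖U‖ ≤ M₀ * exp (η * (t - r))) (hv : ‖v‖ ≤ M₁ * exp (η * (r - s)) * ‖ψ‖) :
    ‖U (L v)‖ ≤ M₀ * M₁ * exp (η * (t - s)) * ‖ψ‖ * ‖L‖ :=
  calc ‖U (L v)‖ ≤ ‖U‖ * (‖L‖ * ‖v‖) := U.le_of_opNorm_le_of_le le_rfl (L.le_opNorm v)
    _ ≤ M₀ * exp (η * (t - r)) * (‖L‖ * (M₁ * exp (η * (r - s)) * ‖ψ‖)) :=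
      mul_le_mul hU (by gcongr) (by positivity) ((norm_nonneg U).trans hU)
    _ = M₀ * M₁ * (exp (η * (t - r)) * exp (η * (r - s))) * ‖ψ‖ * ‖L‖ := by ring
    _ = M₀ * M₁ * exp (η * (t - s)) * ‖ψ‖ * ‖L‖ := by rw [← exp_add]; ring_nf

theorem evolution_system_perturbation_estimate_general
    {X Y : Type*} [NormedAddCommGroup X] [NormedSpace ℝ X] [CompleteSpace X]
    [NormedAddCommGroup Y] [NormedSpace ℝ Y]
    (ι : Y →L[ℝ] X) (M₀ M₁ η : ℝ)
    (s t : ℝ) (hst : s ≤ t)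
    (U : ℝ → ℝ → X →L[ℝ] X) (V : ℝ → ℝ → Y →L[ℝ] Y)
    (A B : ℝ → Y →L[ℝ] X) (ψ : Y)
    (hUid : ∀ x : X, U t t x = x) (hVid : V s s ψ = ψ)
    (hUb : ∀ r, s ≤ r → r ≤ t → ‖U t r‖ ≤ M₀ * exp (η * (t - r)))
    (hVb : ∀ r, s ≤ r → r ≤ t → ‖V r s ψ‖ ≤ M₁ * exp (η * (r - s)) * ‖ψ‖)
    (hfc : ContinuousOn (fun r => U t r (ι (V r s ψ))) (Set.Icc s t))
    (F : Set ℝ) (hF : F.Finite)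
    (hderiv : ∀ r ∈ Set.Ioo s t \ F,
      HasDerivAt (fun r => U t r (ι (V r s ψ))) (U t r ((B r - A r) (V r s ψ))) r)
    (hint : IntervalIntegrable (fun r => ‖A r - B r‖) volume s t) :
    ‖U t s (ι ψ) - ι (V t s ψ)‖ ≤
      M₀ * M₁ * exp (η * (t - s)) * ‖ψ‖ * ∫ r in s..t, ‖A r - B r‖ := by
  have hbound : ∀ r ∈ Ioo s t \ F, ‖U t r ((B r - A r) (V r s ψ))‖ ≤
      M₀ * M₁ * exp (η * (t - s)) * ‖ψ‖ * ‖A r - B r‖ := fun r hr => by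
    rw [norm_sub_rev (A r)]
    exact norm_apply_apply_le_of_exp_bounds _ _ (hUb r hr.1.1.le hr.1.2.le)
      (hVb r hr.1.1.le hr.1.2.le)
  have h := norm_sub_le_integral_of_hasDerivAt_off_countable hst hF.countable hfc hderiv
    (hint.const_mul _) hbound
  rwa [intervalIntegral.integral_const_mul, hUid, hVid, norm_sub_rev] at h

/-- Perturbation estimate comparing two evolution systems: if `r ↦ U(t,r)V(r,s)ψ` is
continuous on `[s,t]` and differentiable off a finite set with derivative
`U(t,r)((B r − A r)(V(r,s)ψ))`, and `U`, `V` satisfy exponential bounds in `X` resp. `Y`,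
then `‖U(t,s)ψ − V(t,s)ψ‖_X ≤ M₀ M₁ e^{η(t-s)} ‖ψ‖_Y ∫_s^t ‖A r − B r‖_{L(Y,X)} dr`. -/
theorem evolution_system_perturbation_estimate
    {X Y : Type*} [NormedAddCommGroup X] [NormedSpace ℝ X] [CompleteSpace X]
    [NormedAddCommGroup Y] [NormedSpace ℝ Y] [CompleteSpace Y]
    (ι : Y →L[ℝ] X) (T M₀ M₁ η : ℝ) (hM₀ : 1 ≤ M₀) (hM₁ : 1 ≤ M₁)
    (s t : ℝ) (hs : 0 ≤ s) (hst : s ≤ t) (htT : t ≤ T)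
    (U : ℝ → ℝ → X →L[ℝ] X) (V : ℝ → ℝ → Y →L[ℝ] Y)
    (A B : ℝ → Y →L[ℝ] X) (ψ : Y)
    (hUid : ∀ x : X, U t t x = x) (hVid : V s s ψ = ψ)
    (hUb : ∀ r, s ≤ r → r ≤ t → ‖U t r‖ ≤ M₀ * exp (η * (t - r)))
    (hVb : ∀ r, s ≤ r → r ≤ t → ‖V r s ψ‖ ≤ M₁ * exp (η * (r - s)) * ‖ψ‖)
    (hfc : ContinuousOn (fun r => U t r (ι (V r s ψ))) (Set.Icc s t))
    (F : Set ℝ) (hF : F.Finite)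
    (hderiv : ∀ r ∈ Set.Ioo s t \ F,
      HasDerivAt (fun r => U t r (ι (V r s ψ))) (U t r ((B r - A r) (V r s ψ))) r)
    (hint : IntervalIntegrable (fun r => ‖A r - B r‖) volume s t) :
    ‖U t s (ι ψ) - ι (V t s ψ)‖ ≤
      M₀ * M₁ * exp (η * (t - s)) * ‖ψ‖ * ∫ r in s..t, ‖A r - B r‖ :=
  evolution_system_perturbation_estimate_general ι M₀ M₁ η s t hst U V A B ψ hUid hVid hUb hVb hfc F
    hF hderiv hint
end
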